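/- Let s > 1/2. There is a constant C depending only on s such that ‖f‖_{L^∞(ℝ)} ≤ C ‖f‖_{H^s_𝒟(ℝ)} for each f in the linear span of the Haar functions; i.e., the dyadic Sobolev space H^s_𝒟(ℝ) embeds into L^∞(ℝ) (dyadic Morrey embedding). -/

import Mathlib

/-!
Write `f = ∑ c_I h_I`. Orthonormality of the Haar system gives `(f, h_I) = c_I` and
`‖f‖₂² = ∑ c_I²`, so for `|I| = 2^n` both `|c_I|` and `2^{-sn} |c_I|` are at most the Sobolev norm
`N` of `f`. Since `|h_I| = |I|^{-1/2} 1_I` and `x` lies in exactly one dyadic interval of each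
length, `|f(x)| ≤ ∑_n |c_{I_n(x)}| 2^{-n/2}`; the two coefficient bounds, used for `n ≥ 0` and
`n ≤ 0` respectively, give `|c_I| 2^{-n/2} ≤ N 2^{-t|n|}` with `t = min (1/2) (s - 1/2) > 0`,
and the geometric series over `n ∈ ℤ` converges.
-/

open MeasureTheory Filter
open scoped ENNReal Classical Topology

noncomputable section

/-- The standard dyadic interval `[k·2^n, (k+1)·2^n)`. -/
def dyadic (n k : ℤ) : Set ℝ := Set.Ico ((k : ℝ) * 2 ^ n) (((k : ℝ) + 1) * 2 ^ n)

/-- The Haar function associated with `dyadic n k`: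
`h_I = |I|^{-1/2} (1_{I_+} - 1_{I_-})`. -/
def haar (n k : ℤ) : ℝ → ℝ := fun x =>
  (2 : ℝ) ^ (-(n : ℝ) / 2) *
    ((dyadic (n - 1) (2 * k + 1)).indicator 1 x - (dyadic (n - 1) (2 * k)).indicator 1 x)

/-- The constant value of `haar n k` on the dyadic subinterval `dyadic m j`
(its value at the left endpoint of that subinterval). -/
def haarVal (n k m j : ℤ) : ℝ := haar n k ((j : ℝ) * 2 ^ m)

/-- Haar coefficient `(f, h_I)`. -/
def innH (f : ℝ → ℝ) (n k : ℤ) : ℝ := ∫ x, f x * haar n k x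

/-- Dyadic average `⟨f⟩_I = |I|⁻¹ ∫_I f`. -/
def avg (f : ℝ → ℝ) (n k : ℤ) : ℝ := (2 : ℝ) ^ (-n) * ∫ x in dyadic n k, f x

/-- The linear span of the Haar functions. -/
def haarSpan : Submodule ℝ (ℝ → ℝ) :=
  Submodule.span ℝ (Set.range fun p : ℤ × ℤ => haar p.1 p.2)

end

lemma mem_dyadic_iff {n k : ℤ} {x : ℝ} : x ∈ dyadic n k ↔ ⌊x / 2 ^ n⌋ = k := by
  rw [Int.floor_eq_iff, dyadic, Set.mem_Ico, le_div_iff₀ (by positivity),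
    div_lt_iff₀ (by positivity)]

lemma left_mem_dyadic (n k : ℤ) : (k : ℝ) * 2 ^ n ∈ dyadic n k := by
  rw [mem_dyadic_iff, mul_div_cancel_right₀ _ (by positivity), Int.floor_intCast]

lemma floor_div_two_zpow_of_le {n m : ℤ} (h : n ≤ m) (x : ℝ) :
    ⌊x / 2 ^ m⌋ = ⌊x / 2 ^ n⌋ / 2 ^ (m - n).toNat := by
  have hm : (2 : ℝ) ^ m = 2 ^ n * ((2 ^ (m - n).toNat : ℕ) : ℝ) := by
    rw [Nat.cast_pow, Nat.cast_ofNat, ← zpow_natCast, Int.toNat_of_nonneg (by omega),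
      ← zpow_add₀ two_ne_zero, add_sub_cancel]
  rw [hm, ← div_div, Int.floor_div_natCast]
  norm_cast

lemma mem_dyadic_iff_floor_half {n k : ℤ} {x : ℝ} :
    x ∈ dyadic n k ↔ ⌊x / 2 ^ (n - 1)⌋ / 2 = k := by
  rw [mem_dyadic_iff, floor_div_two_zpow_of_le (by omega : n - 1 ≤ n)]
  simp

lemma haar_apply (n k : ℤ) (x : ℝ) :
    haar n k x = (2 : ℝ) ^ (-(n : ℝ) / 2) *
      ((if ⌊x / 2 ^ (n - 1)⌋ = 2 * k + 1 then 1 else 0) -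
        if ⌊x / 2 ^ (n - 1)⌋ = 2 * k then 1 else 0) := by
  simp only [haar, Set.indicator_apply, mem_dyadic_iff, Pi.one_apply]

lemma abs_haar (n k : ℤ) (x : ℝ) :
    |haar n k x| = (dyadic n k).indicator (fun _ => (2 : ℝ) ^ (-(n : ℝ) / 2)) x := by
  have hpos : 0 < (2 : ℝ) ^ (-(n : ℝ) / 2) := by positivity
  rw [haar_apply, Set.indicator_apply, mem_dyadic_iff_floor_half]
  split_ifs <;> first | omega | simp [abs_of_pos hpos]

lemma abs_haar_le (n k : ℤ) (x : ℝ) : |haar n k x| ≤ (2 : ℝ) ^ (-(n : ℝ) / 2) := by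
  rw [abs_haar]
  exact Set.indicator_le_self' (fun _ _ => by positivity) x

lemma haar_eq_zero_of_notMem {n k : ℤ} {x : ℝ} (hx : x ∉ dyadic n k) : haar n k x = 0 := by
  rw [← abs_eq_zero, abs_haar, Set.indicator_of_notMem hx]

lemma haar_eq_haarVal_of_mem {n k m j : ℤ} (hnm : n < m) {x : ℝ} (hx : x ∈ dyadic n k) :
    haar m j x = haarVal m j n k := by
  have hfloor : ⌊x / 2 ^ (m - 1)⌋ = ⌊(k : ℝ) * 2 ^ n / 2 ^ (m - 1)⌋ := by
    rw [floor_div_two_zpow_of_le (by omega : n ≤ m - 1),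
      floor_div_two_zpow_of_le (by omega : n ≤ m - 1), mem_dyadic_iff.mp hx,
      mem_dyadic_iff.mp (left_mem_dyadic n k)]
  rw [haarVal, haar_apply, haar_apply, hfloor]

lemma measurableSet_dyadic (n k : ℤ) : MeasurableSet (dyadic n k) := measurableSet_Ico

lemma volume_real_dyadic (n k : ℤ) : volume.real (dyadic n k) = 2 ^ n := by
  rw [dyadic, Real.volume_real_Ico_of_le (by gcongr; linarith)]
  ring

lemma integrable_indicator_one_dyadic (n k : ℤ) :
    Integrable ((dyadic n k).indicator (1 : ℝ → ℝ)) :=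
  (integrable_indicator_iff (measurableSet_dyadic n k)).2
    (integrableOn_const (by rw [dyadic, Real.volume_Ico]; exact ENNReal.ofReal_ne_top))

lemma integrable_haar (n k : ℤ) : Integrable (haar n k) :=
  ((integrable_indicator_one_dyadic _ _).sub (integrable_indicator_one_dyadic _ _)).const_mul _

lemma integral_haar (n k : ℤ) : ∫ x, haar n k x = 0 := by
  simp only [haar]
  rw [integral_const_mul, integral_sub (integrable_indicator_one_dyadic _ _)
    (integrable_indicator_one_dyadic _ _), integral_indicator_one (measurableSet_dyadic _ _),
    integral_indicator_one (measurableSet_dyadic _ _), volume_real_dyadic, volume_real_dyadic,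
    sub_self, mul_zero]

lemma integral_haar_mul_self (n k : ℤ) : ∫ x, haar n k x * haar n k x = 1 := by
  have hsq : ∀ x,
      haar n k x * haar n k x = (dyadic n k).indicator (fun _ => ((2 : ℝ) ^ n)⁻¹) x := by
    intro x
    rw [← abs_mul_abs_self, abs_haar]
    by_cases hx : x ∈ dyadic n k
    · rw [Set.indicator_of_mem hx, Set.indicator_of_mem hx, ← Real.rpow_add two_pos,
        ← Real.rpow_intCast, ← Real.rpow_neg two_pos.le]
      ring_nf
    · simp only [Set.indicator_of_notMem hx, mul_zero]
  simp_rw [hsq]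
  rw [integral_indicator_const _ (measurableSet_dyadic n k), volume_real_dyadic, smul_eq_mul,
    mul_inv_cancel₀ (by positivity)]

lemma integral_haar_mul_haar_of_lt {n k m j : ℤ} (hnm : n < m) :
    ∫ x, haar n k x * haar m j x = 0 := by
  have hconst : ∀ x, haar n k x * haar m j x = haar n k x * haarVal m j n k := by
    intro x
    by_cases hx : x ∈ dyadic n k
    · rw [haar_eq_haarVal_of_mem hnm hx]
    · rw [haar_eq_zero_of_notMem hx, zero_mul, zero_mul]
  simp_rw [hconst]
  rw [integral_mul_const, integral_haar, zero_mul]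

lemma haar_mul_haar_of_ne {n k j : ℤ} (hkj : k ≠ j) (x : ℝ) : haar n k x * haar n j x = 0 := by
  by_cases hx : x ∈ dyadic n k
  · have hx' : x ∉ dyadic n j := fun hx' =>
      hkj (by rw [← mem_dyadic_iff.mp hx, mem_dyadic_iff.mp hx'])
    rw [haar_eq_zero_of_notMem hx', mul_zero]
  · rw [haar_eq_zero_of_notMem hx, zero_mul]

lemma integral_haar_mul_haar (p q : ℤ × ℤ) :
    ∫ x, haar p.1 p.2 x * haar q.1 q.2 x = if p = q then 1 else 0 := by
  obtain ⟨n, k⟩ := p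
  obtain ⟨m, j⟩ := q
  split_ifs with hpq
  · obtain ⟨rfl, rfl⟩ := Prod.mk.inj hpq
    exact integral_haar_mul_self n k
  rcases lt_trichotomy n m with hnm | rfl | hmn
  · exact integral_haar_mul_haar_of_lt hnm
  · have hkj : k ≠ j := fun hkj => hpq (by rw [hkj])
    simp_rw [haar_mul_haar_of_ne hkj, integral_zero]
  · simp_rw [mul_comm (haar n k _)]
    exact integral_haar_mul_haar_of_lt hmn

lemma integrable_haar_mul_haar (p q : ℤ × ℤ) :
    Integrable fun x => haar p.1 p.2 x * haar q.1 q.2 x :=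
  (integrable_haar _ _).mul_bdd (integrable_haar _ _).aestronglyMeasurable
    (ae_of_all _ (abs_haar_le _ _))

noncomputable def haarExpansion (c : ℤ × ℤ →₀ ℝ) : ℝ → ℝ :=
  Finsupp.linearCombination ℝ (fun p : ℤ × ℤ => haar p.1 p.2) c

lemma haarExpansion_apply (c : ℤ × ℤ →₀ ℝ) (x : ℝ) :
    haarExpansion c x = ∑ p ∈ c.support, c p * haar p.1 p.2 x := by
  simp [haarExpansion, Finsupp.linearCombination_apply, Finsupp.sum]

lemma exists_haarExpansion_eq {f : ℝ → ℝ} (hf : f ∈ haarSpan) : ∃ c, haarExpansion c = f := by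
  rwa [haarSpan, ← Finsupp.range_linearCombination] at hf

lemma haarExpansion_mul_haar (c : ℤ × ℤ →₀ ℝ) (q : ℤ × ℤ) (x : ℝ) :
    haarExpansion c x * haar q.1 q.2 x =
      ∑ p ∈ c.support, c p * (haar p.1 p.2 x * haar q.1 q.2 x) := by
  simp_rw [haarExpansion_apply, Finset.sum_mul, mul_assoc]

lemma integral_haarExpansion_mul_haar (c : ℤ × ℤ →₀ ℝ) (q : ℤ × ℤ) :
    ∫ x, haarExpansion c x * haar q.1 q.2 x = c q := by
  simp_rw [haarExpansion_mul_haar]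
  rw [integral_finsetSum _ fun p _ => (integrable_haar_mul_haar p q).const_mul _]
  simp_rw [integral_const_mul, integral_haar_mul_haar, mul_ite, mul_one, mul_zero]
  rw [Finset.sum_ite_eq']
  split_ifs with hq
  · rfl
  · exact (Finsupp.notMem_support_iff.mp hq).symm

lemma innH_haarExpansion (c : ℤ × ℤ →₀ ℝ) (n k : ℤ) : innH (haarExpansion c) n k = c (n, k) :=
  integral_haarExpansion_mul_haar c (n, k)

lemma integral_haarExpansion_sq (c : ℤ × ℤ →₀ ℝ) :
    ∫ x, haarExpansion c x ^ 2 = ∑ p ∈ c.support, c p ^ 2 := by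
  have hexpand : ∀ x, haarExpansion c x ^ 2 =
      ∑ p ∈ c.support, c p * (haarExpansion c x * haar p.1 p.2 x) := by
    intro x
    rw [sq]
    nth_rewrite 2 [haarExpansion_apply]
    rw [Finset.mul_sum]
    exact Finset.sum_congr rfl fun p _ => by ring
  simp_rw [hexpand]
  rw [integral_finsetSum _ fun p _ => ?_]
  · simp_rw [integral_const_mul, integral_haarExpansion_mul_haar, sq]
  · simp_rw [haarExpansion_mul_haar]
    exact (integrable_finsetSum _ fun q _ =>
      (integrable_haar_mul_haar q p).const_mul _).const_mul _

noncomputable def dyadicSobolevNormSq (s : ℝ) (f : ℝ → ℝ) : ℝ :=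
  (∫ x, f x ^ 2) + ∑' p : ℤ × ℤ, (2 : ℝ) ^ (-2 * s * (p.1 : ℝ)) * innH f p.1 p.2 ^ 2

lemma sq_coeff_le_dyadicSobolevNormSq (s : ℝ) (c : ℤ × ℤ →₀ ℝ) (p : ℤ × ℤ) :
    c p ^ 2 ≤ dyadicSobolevNormSq s (haarExpansion c) ∧
      (2 : ℝ) ^ (-2 * s * (p.1 : ℝ)) * c p ^ 2 ≤ dyadicSobolevNormSq s (haarExpansion c) := by
  have hL2 : HasSum (fun q => c q ^ 2) (∫ x, haarExpansion c x ^ 2) := by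
    rw [integral_haarExpansion_sq]
    exact hasSum_sum_of_ne_finset_zero fun q hq => by simp [Finsupp.notMem_support_iff.mp hq]
  have hweighted : HasSum (fun q : ℤ × ℤ => (2 : ℝ) ^ (-2 * s * (q.1 : ℝ)) * c q ^ 2)
      (∑' q : ℤ × ℤ, (2 : ℝ) ^ (-2 * s * (q.1 : ℝ)) * innH (haarExpansion c) q.1 q.2 ^ 2) := by
    simp_rw [innH_haarExpansion]
    exact (summable_of_ne_finset_zero (s := c.support) fun q hq => by
      simp [Finsupp.notMem_support_iff.mp hq]).hasSum
  constructor
  · exact le_add_of_le_of_nonneg (le_hasSum hL2 p fun q _ => by positivity)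
      (hweighted.nonneg fun q => by positivity)
  · exact le_add_of_nonneg_of_le (hL2.nonneg fun q => by positivity)
      (le_hasSum hweighted p fun q _ => by positivity)

lemma abs_mul_two_rpow_le {s t M a : ℝ} {n : ℤ} (ht : t ≤ 1 / 2) (hts : t ≤ s - 1 / 2)
    (ha : a ^ 2 ≤ M) (has : (2 : ℝ) ^ (-2 * s * (n : ℝ)) * a ^ 2 ≤ M) :
    |a| * (2 : ℝ) ^ (-(n : ℝ) / 2) ≤ √M * (2 : ℝ) ^ (-t * |(n : ℝ)|) := by
  rcases le_total 0 n with hn | hn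
  · have hn' : (0 : ℝ) ≤ n := by exact_mod_cast hn
    refine mul_le_mul (Real.abs_le_sqrt ha) (Real.rpow_le_rpow_of_exponent_le one_le_two ?_)
      (by positivity) (Real.sqrt_nonneg _)
    rw [abs_of_nonneg hn']
    nlinarith
  · have hn' : (n : ℝ) ≤ 0 := by exact_mod_cast hn
    have hscaled : |a| * (2 : ℝ) ^ (-s * n) ≤ √M := by
      rw [← abs_of_pos (by positivity : (0 : ℝ) < 2 ^ (-s * n)), ← abs_mul]
      refine Real.abs_le_sqrt (le_of_eq_of_le ?_ has)
      rw [mul_pow, ← Real.rpow_mul_natCast two_pos.le]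
      ring_nf
    calc |a| * (2 : ℝ) ^ (-(n : ℝ) / 2)
        = |a| * (2 : ℝ) ^ (-s * n) * (2 : ℝ) ^ ((s - 1 / 2) * n) := by
          rw [mul_assoc, ← Real.rpow_add two_pos]
          ring_nf
      _ ≤ √M * (2 : ℝ) ^ (-t * |(n : ℝ)|) := by
          refine mul_le_mul hscaled (Real.rpow_le_rpow_of_exponent_le one_le_two ?_)
            (by positivity) (Real.sqrt_nonneg _)
          rw [abs_of_nonpos hn']
          nlinarith

lemma summable_two_rpow_neg_mul_abs {t : ℝ} (ht : 0 < t) :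
    Summable fun n : ℤ => (2 : ℝ) ^ (-t * |(n : ℝ)|) := by
  have hgeom : ∀ n : ℤ, (2 : ℝ) ^ (-t * |(n : ℝ)|) = ((2 : ℝ) ^ (-t)) ^ n.natAbs := fun n => by
    rw [← Real.rpow_mul_natCast two_pos.le, Nat.cast_natAbs, Int.cast_abs]
  have hr := summable_geometric_of_lt_one (by positivity)
    (Real.rpow_lt_one_of_one_lt_of_neg one_lt_two (neg_neg_of_pos ht))
  simp_rw [hgeom]
  exact .of_nat_of_neg (by simpa using hr) (by simpa using hr)

lemma sum_le_tsum_of_injOn {ι κ : Type*} {e : ι → κ} {S : Finset ι} (he : Set.InjOn e S)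
    {g : κ → ℝ} (hg : Summable g) (hg0 : ∀ i, 0 ≤ g i) :
    ∑ i ∈ S, g (e i) ≤ ∑' j, g j := by
  rw [← Finset.sum_image he]
  exact hg.sum_le_tsum _ fun j _ => hg0 j

lemma abs_haarExpansion_le_sum (c : ℤ × ℤ →₀ ℝ) (x : ℝ) :
    |haarExpansion c x| ≤
      ∑ p ∈ c.support with x ∈ dyadic p.1 p.2, |c p| * (2 : ℝ) ^ (-(p.1 : ℝ) / 2) := by
  rw [haarExpansion_apply, Finset.sum_filter]
  refine (Finset.abs_sum_le_sum_abs _ _).trans_eq (Finset.sum_congr rfl fun p _ => ?_)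
  rw [abs_mul, abs_haar, Set.indicator_apply, mul_ite, mul_zero]

theorem abs_haarExpansion_le {s t : ℝ} (ht0 : 0 < t) (ht : t ≤ 1 / 2) (hts : t ≤ s - 1 / 2)
    (c : ℤ × ℤ →₀ ℝ) (x : ℝ) :
    |haarExpansion c x| ≤ (∑' n : ℤ, (2 : ℝ) ^ (-t * |(n : ℝ)|)) *
      √(dyadicSobolevNormSq s (haarExpansion c)) := by
  set N := √(dyadicSobolevNormSq s (haarExpansion c))
  set S : Finset (ℤ × ℤ) := {p ∈ c.support | x ∈ dyadic p.1 p.2}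
  have hlevel : Set.InjOn Prod.fst (S : Set (ℤ × ℤ)) := by
    intro p hp q hq hpq
    simp only [S, Finset.mem_coe, Finset.mem_filter] at hp hq
    refine Prod.ext hpq ?_
    rw [← mem_dyadic_iff.mp hp.2, ← mem_dyadic_iff.mp hq.2, hpq]
  calc |haarExpansion c x|
      ≤ ∑ p ∈ S, |c p| * (2 : ℝ) ^ (-(p.1 : ℝ) / 2) := abs_haarExpansion_le_sum c x
    _ ≤ ∑ p ∈ S, N * (2 : ℝ) ^ (-t * |(p.1 : ℝ)|) :=
        Finset.sum_le_sum fun p _ =>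
          abs_mul_two_rpow_le ht hts (sq_coeff_le_dyadicSobolevNormSq s c p).1
            (sq_coeff_le_dyadicSobolevNormSq s c p).2
    _ ≤ N * ∑' n : ℤ, (2 : ℝ) ^ (-t * |(n : ℝ)|) := by
        rw [← Finset.mul_sum]
        gcongr
        exact sum_le_tsum_of_injOn hlevel (summable_two_rpow_neg_mul_abs ht0)
          fun n => by positivity
    _ = _ := mul_comm _ _

theorem dyadic_Morrey_embedding (s : ℝ) (hs : 1 / 2 < s) :
    ∃ C > 0, ∀ f ∈ haarSpan,
      eLpNorm f ⊤ volume ≤ ENNReal.ofReal (C * Real.sqrt ((∫ x, f x ^ 2) +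
        ∑' p : ℤ × ℤ, (2 : ℝ) ^ (-2 * s * (p.1 : ℝ)) * innH f p.1 p.2 ^ 2)) := by
  set t := min (1 / 2) (s - 1 / 2)
  have ht0 : 0 < t := lt_min (by norm_num) (by linarith)
  refine ⟨_, (summable_two_rpow_neg_mul_abs ht0).tsum_pos (fun n => by positivity) 0
    (by positivity), fun f hf => ?_⟩
  obtain ⟨c, rfl⟩ := exists_haarExpansion_eq hf
  rw [eLpNorm_exponent_top]
  exact eLpNormEssSup_le_of_ae_bound (ae_of_all _
    (abs_haarExpansion_le ht0 (min_le_left _ _) (min_le_right _ _) c))
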